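/- The function $p \mapsto \textsc{F}(p) - \log p$ is non-decreasing on $(0,p_{\max}]$, where $\textsc{F}(p)$ is the almost-sure value of $\limsup_N N^{-1}\log Z_N$ on the percolation event (and $-\infty$ if percolation does not occur). -/

import Mathlib

open MeasureTheory ProbabilityTheory Filter

noncomputable section

/-- Transversal lattice `ℤ^d`. -/
abbrev Zd (d : ℕ) := Fin d → ℤ

/-- A percolation environment on `ℕ × ℤ^d`: `X n x y` tells whether the oriented
edge from `(n, x)` to `(n+1, y)` is open. -/
abbrev Env (d : ℕ) := ℕ → Zd d → Zd d → Bool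

/-- The edge variable associated to an edge `e = (n, x, y)`. -/
def edgeVal (d : ℕ) (e : ℕ × Zd d × Zd d) (X : Env d) : Bool := X e.1 e.2.1 e.2.2

/-- `pathCount d N X` = number of open oriented paths of length `N` starting at the origin. -/
def pathCount (d N : ℕ) (X : Env d) : ℕ :=
  Nat.card {S : Fin (N + 1) → Zd d //
    S 0 = 0 ∧ ∀ i : Fin N, X i (S i.castSucc) (S i.succ) = true}

/-- `pathCountTo d N x X` = number of open oriented paths from `(0,0)` to `(N,x)`. -/
def pathCountTo (d N : ℕ) (x : Zd d) (X : Env d) : ℕ :=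
  Nat.card {S : Fin (N + 1) → Zd d //
    S 0 = 0 ∧ S (Fin.last N) = x ∧ ∀ i : Fin N, X i (S i.castSucc) (S i.succ) = true}

/-- The renormalized partition function `W_N = p^{-N} Z_N`. -/
def W (d : ℕ) (p : ℝ) (N : ℕ) (X : Env d) : ℝ := (pathCount d N X : ℝ) / p ^ N

/-- The percolation event: existence of an infinite open oriented path from the origin. -/
def percEvent (d : ℕ) : Set (Env d) :=
  {X | ∃ S : ℕ → Zd d, S 0 = 0 ∧ ∀ n, X n (S n) (S (n + 1)) = true}

/-- The sigma-algebra generated by the edge variables in time layers `0, …, N-1`. -/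
def cylFilt (d : ℕ) (N : ℕ) : MeasurableSpace (Env d) :=
  MeasurableSpace.comap (fun X => fun (n : Fin N) (x y : Zd d) => X n x y) inferInstance

/-- The environment law: independent Bernoulli edge variables, the edge `(n,x) → (n+1,y)`
being open with probability `p · f (y - x)`. -/
def bernoulliEnv (d : ℕ) (p : ℝ) (f : Zd d → ℝ) (μ : Measure (Env d)) : Prop :=
  iIndepFun (fun e : ℕ × Zd d × Zd d => edgeVal d e) μ ∧
  ∀ n x y, μ {X | X n x y = true} = ENNReal.ofReal (p * f (y - x))

/-- `N⁻¹ log Z_N` as an extended real, with value `⊥` when `Z_N = 0`. -/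
def growthTerm (d : ℕ) (X : Env d) (N : ℕ) : EReal :=
  if pathCount d N X = 0 then ⊥ else ((Real.log (pathCount d N X) / N : ℝ) : EReal)

/-- The environment shifted in time by `N` and in space by `x`. -/
def shiftEnv (d N : ℕ) (x : Zd d) (X : Env d) : Env d := fun n u v => X (n + N) (u + x) (v + x)

/-- The size-biased (tilted) environment: all edges along the walk path `T` (up to time `N`)
are forced open. -/
def tiltEnv (d N : ℕ) (T : Fin (N + 1) → Zd d) (X : Env d) : Env d := fun n x y =>
  if h : n < N then
    (if T ⟨n, Nat.lt_succ_of_lt h⟩ = x ∧ T ⟨n + 1, Nat.succ_lt_succ h⟩ = y then true else X n x y)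
  else X n x y

/-- The probability that a random walk with step distribution `f` started at `0`
follows the path `T` up to time `N`. -/
def walkWeight (d N : ℕ) (f : Zd d → ℝ) (T : Fin (N + 1) → Zd d) : ℝ :=
  if T 0 = 0 then ∏ i : Fin N, f (T i.succ - T i.castSucc) else 0

/-- `(ℙ_p ⊗ P)(W̃_N ≤ K)`: the probability, under the environment law `μ` and an
independent `f`-walk `T`, that the size-biased renormalized partition function
`W̃_N = p^{-N} Z̃_N` is at most `K`. -/
def tiltTailProb (d N : ℕ) (f : Zd d → ℝ) (p : ℝ) (μ : Measure (Env d)) (K : ℝ) : ℝ :=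
  ∑ᶠ T : Fin (N + 1) → Zd d, walkWeight d N f T *
    (μ {X | (pathCount d N (tiltEnv d N T X) : ℝ) / p ^ N ≤ K}).toReal

/-- Tilted environment for an infinite walk `T`: all edges along `T` are forced open. -/
def tiltEnvFull (d : ℕ) (T : ℕ → Zd d) (X : Env d) : Env d := fun n x y =>
  if T n = x ∧ T (n + 1) = y then true else X n x y

/-- The pinned size-biased partition function `Z̄_N`: number of oriented paths from `(0,0)`
to `(N, T_N)` which are open for the tilted environment. -/
def barZ (d N : ℕ) (T : ℕ → Zd d) (X : Env d) : ℕ :=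
  Nat.card {S : Fin (N + 1) → Zd d // S 0 = 0 ∧ S (Fin.last N) = T N ∧
    ∀ i : Fin N, tiltEnvFull d T X i (S i.castSucc) (S i.succ) = true}

/-- Version of `Z̄_N` for a finite walk path `T` of length `N`. -/
def barZfin (d N : ℕ) (T : Fin (N + 1) → Zd d) (X : Env d) : ℕ :=
  Nat.card {S : Fin (N + 1) → Zd d // S 0 = 0 ∧ S (Fin.last N) = T (Fin.last N) ∧
    ∀ i : Fin N, tiltEnv d N T X i (S i.castSucc) (S i.succ) = true}

/-- The environment shifted by `N` in time and `v` in space. -/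
def envSpaceShift (d N : ℕ) (v : Zd d) (X : Env d) : Env d := fun n x y => X (n + N) (x + v) (y + v)

/-- The walk observed after time `N`, recentered at the origin. -/
def walkShift (d N : ℕ) (T : ℕ → Zd d) : ℕ → Zd d := fun n => T (n + N) - T N

/-- `ν` is the law of the random walk started at `0` with i.i.d. increments of law `f`. -/
def isWalkLaw (d : ℕ) (f : Zd d → ℝ) (ν : Measure (ℕ → Zd d)) : Prop :=
  ∀ (M : ℕ) (T' : Fin (M + 1) → Zd d),
    ν {T | ∀ i : Fin (M + 1), T (i : ℕ) = T' i} = ENNReal.ofReal (walkWeight d M f T')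

/-- Monotone coupling of environments at all parameters via uniform variables. -/
def coupledEnv {Ω : Type*} (d : ℕ) (f : Zd d → ℝ) (U : ℕ → Zd d → Zd d → Ω → ℝ)
    (q : ℝ) (ω : Ω) : Env d := fun n x y => decide (U n x y ω ≤ f (y - x) * q)

/-- `k`-fold discrete convolution `f^{∗k}` (the `k`-step transition probability). -/
def fconv (d : ℕ) (f : Zd d → ℝ) : ℕ → Zd d → ℝ
  | 0 => fun z => if z = 0 then 1 else 0
  | (k + 1) => fun z => ∑ᶠ y, f y * fconv d f k (z - y)

/-! Couple all parameters through the uniform variables, the edge `e` being open at parameter `q`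
iff `U_e ≤ f(Δe) q`. For an admissible path `S`, on the event that `S` is open at `p` the count
`Z_N(p)` equals the count with the edges of `S` forced open, which is independent of the edges of
`S`; hence `P(S open at p', Z_N(p) = m) = (p'/p)^N P(S open at p, Z_N(p) = m)`, and summing over
`S` gives `E[Z_N(p'); Z_N(p) = m] = (p'/p)^N m P(Z_N(p) = m)`. Markov's inequality on each level
set and Borel–Cantelli then give, almost surely, `Z_N(p') ≤ θ^N Z_N(p)` for all large `N` and every
`θ > p'/p`, so `F(p') ≤ log (p'/p) + F(p)`. Both limsups are evaluated at one sample point, typical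
for both conditional laws: percolation at `p'` implies percolation at `p`. -/

open scoped ENNReal

theorem EReal.limsup_le_add_limsup_of_forall_gt {ι : Type*} {l : Filter ι}
    {u v : ι → EReal} {c₀ : ℝ} (h : ∀ c : ℝ, c₀ < c → ∀ᶠ i in l, u i ≤ c + v i) :
    limsup u l ≤ c₀ + limsup v l := by
  refine EReal.le_add_of_forall_gt (.inl (EReal.coe_ne_bot c₀)) (.inl (EReal.coe_ne_top c₀))
    fun a ha b hb => limsup_le_of_le (by isBoundedDefault) ?_
  obtain ⟨c, hc₀, hca⟩ := EReal.lt_iff_exists_real_btwn.1 ha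
  filter_upwards [h c (EReal.coe_lt_coe_iff.1 hc₀), eventually_lt_of_limsup_lt hb] with i hu hv
  exact hu.trans (add_le_add hca.le hv.le)

theorem EReal.sub_coe_le_sub_coe_of_le_add {x y : EReal} {a b : ℝ}
    (h : x ≤ ((a - b : ℝ) : EReal) + y) : x - a ≤ y - b := by
  induction x <;> induction y <;> simp_all [← EReal.coe_add, ← EReal.coe_sub]
  linarith

namespace MeasureTheory

variable {Ω : Type*} [MeasurableSpace Ω] {μ : Measure Ω}

theorem measure_le_of_map_eq_uniform {X : Ω → ℝ} (hX : Measurable X)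
    (hunif : μ.map X = volume.restrict (Set.Icc 0 1)) {c : ℝ} (hc₁ : c ≤ 1) :
    μ {ω | X ω ≤ c} = ENNReal.ofReal c := by
  rw [show {ω | X ω ≤ c} = X ⁻¹' Set.Iic c from rfl, ← Measure.map_apply hX measurableSet_Iic,
    hunif, Measure.restrict_apply measurableSet_Iic,
    show Set.Iic c ∩ Set.Icc 0 1 = Set.Icc 0 c from Set.ext fun x =>
      ⟨fun ⟨h, h₀, _⟩ => ⟨h₀, h⟩, fun ⟨h₀, h⟩ => ⟨h, h₀, h.trans hc₁⟩⟩,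
    Real.volume_Icc, sub_zero]

theorem measure_mul_lt_le_of_setLIntegral_le {X : Ω → ℕ} {Y : Ω → ℝ≥0∞} (hX : Measurable X)
    (hY : AEMeasurable Y μ) {c t : ℝ≥0∞} (ht₀ : t ≠ 0) (ht : t ≠ ∞)
    (h : ∀ m : ℕ, ∫⁻ ω in X ⁻¹' {m}, Y ω ∂μ ≤ c * m * μ (X ⁻¹' {m})) :
    μ {ω | t * X ω < Y ω} ≤ c / t * μ Set.univ := by
  have hfiber : ∀ m : ℕ, μ (X ⁻¹' {m} ∩ {ω | t * m < Y ω}) ≤ c / t * μ (X ⁻¹' {m}) := by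
    intro m
    rcases Nat.eq_zero_or_pos m with rfl | hm
    · have hY0 : Y =ᵐ[μ.restrict (X ⁻¹' {0})] 0 := by
        rw [← lintegral_eq_zero_iff' hY.restrict]
        simpa using h 0
      have : μ.restrict (X ⁻¹' {0}) {ω | t * ((0 : ℕ) : ℝ≥0∞) < Y ω} = 0 := by
        simp only [Nat.cast_zero, mul_zero]
        exact measure_mono_null (fun ω hω => ne_of_gt hω) (ae_iff.1 hY0)
      rw [Measure.restrict_apply' (hX (measurableSet_singleton 0)), Set.inter_comm] at this
      exact this.le.trans zero_le
    · have htm₀ : t * m ≠ 0 := mul_ne_zero ht₀ (by exact_mod_cast hm.ne')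
      have htm : t * m ≠ ∞ := ENNReal.mul_ne_top ht (ENNReal.natCast_ne_top m)
      refine (ENNReal.mul_le_mul_iff_right htm₀ htm).1 ?_
      calc t * m * μ (X ⁻¹' {m} ∩ {ω | t * m < Y ω})
          ≤ t * m * μ.restrict (X ⁻¹' {m}) {ω | t * m ≤ Y ω} := by
            rw [Measure.restrict_apply' (hX (measurableSet_singleton m)), Set.inter_comm]
            gcongr
            exact le_of_lt
        _ ≤ ∫⁻ ω in X ⁻¹' {m}, Y ω ∂μ := mul_meas_ge_le_lintegral₀ hY.restrict _
        _ ≤ c * m * μ (X ⁻¹' {m}) := h m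
        _ = t * m * (c / t * μ (X ⁻¹' {m})) := by
            conv_lhs => rw [← ENNReal.div_mul_cancel (b := c) ht₀ ht]
            ring
  have hcover : {ω | t * X ω < Y ω} = ⋃ m : ℕ, X ⁻¹' {m} ∩ {ω | t * m < Y ω} := by
    ext ω; simp
  calc μ {ω | t * X ω < Y ω} ≤ ∑' m : ℕ, μ (X ⁻¹' {m} ∩ {ω | t * m < Y ω}) :=
        hcover ▸ measure_iUnion_le _
    _ ≤ ∑' m : ℕ, c / t * μ (X ⁻¹' {m}) := ENNReal.tsum_le_tsum hfiber
    _ = c / t * μ Set.univ := by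
        rw [ENNReal.tsum_mul_left, ← measure_iUnion
          (fun i j hij => Set.disjoint_left.2 fun ω hi hj => hij (hi.symm.trans hj))
          (fun m => hX (measurableSet_singleton m))]
        congr 2
        ext ω
        simp

end MeasureTheory

theorem ProbabilityTheory.cond_absolutelyContinuous_cond_of_subset {Ω : Type*} [MeasurableSpace Ω]
    {μ : Measure Ω} {s t : Set Ω} (hst : s ⊆ t) (ht : μ t ≠ ∞) : μ[|s] ≪ μ[|t] :=
  Measure.smul_absolutelyContinuous.trans <|
    (Measure.restrict_mono hst le_rfl).absolutelyContinuous.trans <|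
      Measure.absolutelyContinuous_smul (ENNReal.inv_ne_zero.2 ht)

namespace OrientedPercolation

variable {d : ℕ}

theorem growthTerm_le_log_add {X X' : Env d} {N : ℕ} (hN : 0 < N) {θ : ℝ} (hθ : 0 < θ)
    (h : (pathCount d N X' : ℝ) ≤ θ ^ N * pathCount d N X) :
    growthTerm d X' N ≤ Real.log θ + growthTerm d X N := by
  rcases Nat.eq_zero_or_pos (pathCount d N X') with h' | h'
  · simp [growthTerm, h']
  have hZ' : (0 : ℝ) < pathCount d N X' := by exact_mod_cast h'
  have hZ : (0 : ℝ) < pathCount d N X := pos_of_mul_pos_right (hZ'.trans_le h) (by positivity)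
  have hN' : (0 : ℝ) < N := by exact_mod_cast hN
  rw [growthTerm, growthTerm, if_neg h'.ne', if_neg (by exact_mod_cast hZ.ne'), ← EReal.coe_add,
    EReal.coe_le_coe_iff, div_le_iff₀ hN', add_mul, div_mul_cancel₀ _ hN'.ne']
  calc Real.log (pathCount d N X') ≤ Real.log (θ ^ N * pathCount d N X) := Real.log_le_log hZ' h
    _ = Real.log θ * N + Real.log (pathCount d N X) := by
        rw [Real.log_mul (by positivity) hZ.ne', Real.log_pow, mul_comm]

theorem limsup_growthTerm_le {X X' : Env d} {r : ℝ} (hr : 0 < r)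
    (h : ∀ θ > r, ∀ᶠ N in atTop, (pathCount d N X' : ℝ) ≤ θ ^ N * pathCount d N X) :
    limsup (growthTerm d X') atTop ≤ Real.log r + limsup (growthTerm d X) atTop := by
  refine EReal.limsup_le_add_limsup_of_forall_gt fun c hc => ?_
  have hθ : r < Real.exp c := (Real.log_lt_iff_lt_exp hr).1 hc
  filter_upwards [h _ hθ, eventually_gt_atTop 0] with N hN hN₀
  simpa using growthTerm_le_log_add hN₀ (Real.exp_pos c) hN

def stepPaths (f : Zd d → ℝ) (N : ℕ) : Set (Fin (N + 1) → Zd d) :=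
  {S | S 0 = 0 ∧ ∀ i : Fin N, f (S i.succ - S i.castSucc) ≠ 0}

theorem eq_of_increments_eq {N : ℕ} {S S' : Fin (N + 1) → Zd d} (h₀ : S 0 = S' 0)
    (h : ∀ i : Fin N, S i.succ - S i.castSucc = S' i.succ - S' i.castSucc) : S = S' := by
  funext j
  induction j using Fin.induction with
  | zero => exact h₀
  | succ i ih => rw [← sub_add_cancel (S i.succ) (S i.castSucc), h i, ih, sub_add_cancel]

theorem stepPaths_finite {f : Zd d → ℝ} (hfin : (Function.support f).Finite) (N : ℕ) :
    (stepPaths f N).Finite := by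
  refine Set.Finite.of_finite_image (f := fun S (i : Fin N) => S i.succ - S i.castSucc)
    ((Set.Finite.pi fun _ => hfin).subset ?_) ?_
  · rintro _ ⟨S, ⟨-, hS⟩, rfl⟩ i -
    exact hS i
  · exact fun S hS S' hS' h => eq_of_increments_eq (hS.1.trans hS'.1.symm) (congrFun h)

def pathEdge {N : ℕ} (S : Fin (N + 1) → Zd d) (i : Fin N) : ℕ × Zd d × Zd d :=
  (i, S i.castSucc, S i.succ)

def pathEdges {N : ℕ} (S : Fin (N + 1) → Zd d) : Finset (ℕ × Zd d × Zd d) :=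
  Finset.univ.image (pathEdge S)

theorem pathEdge_injective {N : ℕ} (S : Fin (N + 1) → Zd d) : Function.Injective (pathEdge S) :=
  fun _ _ h => Fin.val_injective (congrArg Prod.fst h)

section Coupling

variable {Ω : Type*} {f : Zd d → ℝ} {U : ℕ → Zd d → Zd d → Ω → ℝ}

def edgeOpen (f : Zd d → ℝ) (U : ℕ → Zd d → Zd d → Ω → ℝ) (q : ℝ) (e : ℕ × Zd d × Zd d) :
    Set Ω :=
  {ω | U e.1 e.2.1 e.2.2 ω ≤ f (e.2.2 - e.2.1) * q}

def pathOpen (f : Zd d → ℝ) (U : ℕ → Zd d → Zd d → Ω → ℝ) (q : ℝ) {N : ℕ}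
    (S : Fin (N + 1) → Zd d) : Set Ω :=
  ⋂ e ∈ pathEdges S, edgeOpen f U q e

theorem mem_pathOpen_iff {q : ℝ} {N : ℕ} {S : Fin (N + 1) → Zd d} {ω : Ω} :
    ω ∈ pathOpen f U q S ↔
      ∀ i : Fin N, coupledEnv d f U q ω i (S i.castSucc) (S i.succ) = true := by
  simp [pathOpen, pathEdges, pathEdge, edgeOpen, coupledEnv]

def openPathCount (hfin : (Function.support f).Finite) (U : ℕ → Zd d → Zd d → Ω → ℝ) (q : ℝ)
    (N : ℕ) (ω : Ω) : ℕ :=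
  ∑ S ∈ (stepPaths_finite hfin N).toFinset, (pathOpen f U q S).indicator 1 ω

def forcedPathCount (hfin : (Function.support f).Finite) (U : ℕ → Zd d → Zd d → Ω → ℝ) (q : ℝ)
    {N : ℕ} (T : Fin (N + 1) → Zd d) (ω : Ω) : ℕ :=
  ∑ S ∈ (stepPaths_finite hfin N).toFinset,
    (⋂ e ∈ pathEdges S \ pathEdges T, edgeOpen f U q e).indicator 1 ω

/-- Under `coupledEnv`, an edge with `f (y - x) = 0` is open exactly when `U n x y ω ≤ 0`. -/
theorem pathCount_coupledEnv (hfin : (Function.support f).Finite) {ω : Ω}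
    (hω : ∀ n x y, 0 < U n x y ω) (q : ℝ) (N : ℕ) :
    pathCount d N (coupledEnv d f U q ω) = openPathCount hfin U q N ω := by
  classical
  have hiff : ∀ S : Fin (N + 1) → Zd d,
      (S 0 = 0 ∧ ∀ i : Fin N, coupledEnv d f U q ω i (S i.castSucc) (S i.succ) = true) ↔
        S ∈ (stepPaths_finite hfin N).toFinset.filter (ω ∈ pathOpen f U q ·) := by
    intro S
    rw [Finset.mem_filter, Set.Finite.mem_toFinset, mem_pathOpen_iff]
    refine ⟨fun ⟨h₀, hS⟩ => ⟨⟨h₀, fun i hf => ?_⟩, hS⟩, fun ⟨⟨h₀, _⟩, hS⟩ => ⟨h₀, hS⟩⟩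
    have := hS i
    simp only [coupledEnv, hf, zero_mul, decide_eq_true_eq] at this
    exact (hω _ _ _).not_ge this
  rw [pathCount, Nat.card_congr (Equiv.subtypeEquivRight hiff), Nat.card_eq_finsetCard,
    Finset.card_filter, openPathCount]
  simp [Set.indicator_apply]

theorem edgeOpen_mono (hf0 : ∀ z, 0 ≤ f z) {q q' : ℝ} (hq : q ≤ q') (e : ℕ × Zd d × Zd d) :
    edgeOpen f U q e ⊆ edgeOpen f U q' e :=
  fun _ hω => hω.trans (mul_le_mul_of_nonneg_left hq (hf0 _))

theorem pathOpen_mono (hf0 : ∀ z, 0 ≤ f z) {q q' : ℝ} (hq : q ≤ q') {N : ℕ}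
    (S : Fin (N + 1) → Zd d) : pathOpen f U q S ⊆ pathOpen f U q' S :=
  Set.biInter_mono subset_rfl fun e _ => edgeOpen_mono hf0 hq e

theorem preimage_percEvent_mono (hf0 : ∀ z, 0 ≤ f z) {q q' : ℝ} (hq : q ≤ q') :
    coupledEnv d f U q ⁻¹' percEvent d ⊆ coupledEnv d f U q' ⁻¹' percEvent d := by
  rintro ω ⟨S, h₀, hS⟩
  refine ⟨S, h₀, fun n => ?_⟩
  have := hS n
  simp only [coupledEnv, decide_eq_true_eq] at this ⊢
  exact this.trans (mul_le_mul_of_nonneg_left hq (hf0 _))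

theorem forcedPathCount_eq_openPathCount (hfin : (Function.support f).Finite) {q : ℝ} {N : ℕ}
    {T : Fin (N + 1) → Zd d} {ω : Ω} (hω : ω ∈ pathOpen f U q T) :
    forcedPathCount hfin U q T ω = openPathCount hfin U q N ω := by
  refine Finset.sum_congr rfl fun S _ => ?_
  have : ω ∈ ⋂ e ∈ pathEdges S \ pathEdges T, edgeOpen f U q e ↔ ω ∈ pathOpen f U q S := by
    simp only [pathOpen, Set.mem_iInter₂, Finset.mem_sdiff] at hω ⊢
    exact ⟨fun h e he => (em (e ∈ pathEdges T)).elim (hω e) (h e ⟨he, ·⟩), fun h e he => h e he.1⟩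
  classical
  rw [Set.indicator_apply, Set.indicator_apply, if_congr this rfl rfl]

def edgeSigma (U : ℕ → Zd d → Zd d → Ω → ℝ) (E : Set (ℕ × Zd d × Zd d)) : MeasurableSpace Ω :=
  ⨆ e ∈ E, MeasurableSpace.comap (U e.1 e.2.1 e.2.2) inferInstance

theorem measurableSet_biInter_edgeOpen {E : Set (ℕ × Zd d × Zd d)}
    {s : Finset (ℕ × Zd d × Zd d)} (hs : ↑s ⊆ E) (q : ℝ) :
    MeasurableSet[edgeSigma U E] (⋂ e ∈ s, edgeOpen f U q e) :=
  Finset.measurableSet_biInter s fun e he =>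
    le_iSup₂ (f := fun e (_ : e ∈ E) => MeasurableSpace.comap (U e.1 e.2.1 e.2.2) inferInstance)
      e (hs he) _ ⟨Set.Iic _, measurableSet_Iic, rfl⟩

theorem measurable_forcedPathCount (hfin : (Function.support f).Finite) (q : ℝ) {N : ℕ}
    (T : Fin (N + 1) → Zd d) :
    Measurable[edgeSigma U (↑(pathEdges T))ᶜ] (forcedPathCount hfin U q T) :=
  letI := edgeSigma U (↑(pathEdges T))ᶜ
  Finset.measurable_sum _ fun _ _ => measurable_one.indicator <|
    measurableSet_biInter_edgeOpen (fun _ he => (Finset.mem_sdiff.1 he).2) q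

end Coupling

variable {Ω : Type*} [MeasurableSpace Ω] {μ : Measure Ω} {f : Zd d → ℝ}
  {U : ℕ → Zd d → Zd d → Ω → ℝ}

structure IsUniformField (μ : Measure Ω) (U : ℕ → Zd d → Zd d → Ω → ℝ) : Prop where
  measurable : ∀ n x y, Measurable (U n x y)
  iIndepFun : iIndepFun (fun e : ℕ × Zd d × Zd d => U e.1 e.2.1 e.2.2) μ
  map_eq : ∀ n x y, μ.map (U n x y) = (volume : Measure ℝ).restrict (Set.Icc 0 1)

theorem IsUniformField.ae_forall_pos (hU : IsUniformField μ U) :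
    ∀ᵐ ω ∂μ, ∀ n x y, 0 < U n x y ω := by
  refine ae_all_iff.2 fun n => ae_all_iff.2 fun x => ae_all_iff.2 fun y => ?_
  simp only [ae_iff, not_lt]
  rw [measure_le_of_map_eq_uniform (hU.measurable n x y) (hU.map_eq n x y) zero_le_one,
    ENNReal.ofReal_zero]

theorem IsUniformField.indep_edgeSigma_compl (hU : IsUniformField μ U)
    (E : Set (ℕ × Zd d × Zd d)) : Indep (edgeSigma U E) (edgeSigma U Eᶜ) μ :=
  (indep_iSup_of_disjoint (fun e => (hU.measurable e.1 e.2.1 e.2.2).comap_le) hU.iIndepFun.iIndep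
    (disjoint_compl_right (a := E)) :)

theorem IsUniformField.measurableSet_pathOpen (hU : IsUniformField μ U) (q : ℝ) {N : ℕ}
    (S : Fin (N + 1) → Zd d) : MeasurableSet (pathOpen f U q S) :=
  Finset.measurableSet_biInter _ fun _ _ => hU.measurable _ _ _ measurableSet_Iic

theorem IsUniformField.measurable_openPathCount (hfin : (Function.support f).Finite)
    (hU : IsUniformField μ U) (q : ℝ) (N : ℕ) : Measurable (openPathCount hfin U q N) :=
  Finset.measurable_sum _ fun S _ => measurable_one.indicator (hU.measurableSet_pathOpen q S)

theorem IsUniformField.measure_pathOpen (hU : IsUniformField μ U) (hf0 : ∀ z, 0 ≤ f z) {q : ℝ}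
    (hq0 : 0 ≤ q) (hq1 : ∀ z, q * f z ≤ 1) {N : ℕ} (S : Fin (N + 1) → Zd d) :
    μ (pathOpen f U q S) = ENNReal.ofReal (q ^ N * ∏ i : Fin N, f (S i.succ - S i.castSucc)) := by
  have hedge : ∀ i, μ (edgeOpen f U q (pathEdge S i)) =
      ENNReal.ofReal (f (S i.succ - S i.castSucc) * q) := fun i =>
    measure_le_of_map_eq_uniform (hU.measurable _ _ _) (hU.map_eq _ _ _)
      ((mul_comm _ _).trans_le (hq1 _))
  rw [pathOpen, hU.iIndepFun.meas_biInter (S := pathEdges S) (s := edgeOpen f U q)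
      fun _ _ => ⟨Set.Iic _, measurableSet_Iic, rfl⟩, pathEdges, Finset.prod_image fun i _ j _ h => pathEdge_injective S h]
  simp_rw [hedge]
  rw [← ENNReal.ofReal_prod_of_nonneg fun i _ => mul_nonneg (hf0 _) hq0, Finset.prod_mul_distrib,
    Finset.prod_const, Finset.card_univ, Fintype.card_fin, mul_comm]

theorem IsUniformField.measure_pathOpen_inter_fiber (hfin : (Function.support f).Finite)
    (hU : IsUniformField μ U) (hf0 : ∀ z, 0 ≤ f z) {q p : ℝ} (hqp : q ≤ p) {N : ℕ}
    (S : Fin (N + 1) → Zd d) (m : ℕ) :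
    μ (pathOpen f U q S ∩ openPathCount hfin U p N ⁻¹' {m}) =
      μ (pathOpen f U q S) * μ (forcedPathCount hfin U p S ⁻¹' {m}) := by
  have hcount : pathOpen f U q S ∩ openPathCount hfin U p N ⁻¹' {m} =
      pathOpen f U q S ∩ forcedPathCount hfin U p S ⁻¹' {m} := by
    ext ω
    refine and_congr_right fun hω => ?_
    rw [Set.mem_preimage, Set.mem_preimage,
      forcedPathCount_eq_openPathCount hfin (pathOpen_mono hf0 hqp S hω)]
  rw [hcount]
  exact (Indep_iff _ _ μ).1 (hU.indep_edgeSigma_compl _) _ _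
    (measurableSet_biInter_edgeOpen subset_rfl q)
    (measurable_forcedPathCount hfin p S (measurableSet_singleton m))

theorem IsUniformField.measure_pathOpen_inter_fiber_eq_pow_mul
    (hfin : (Function.support f).Finite) (hU : IsUniformField μ U) (hf0 : ∀ z, 0 ≤ f z)
    {p' p : ℝ} (hp' : 0 < p') (hp'p : p' ≤ p) (hp : ∀ z, p * f z ≤ 1) {N : ℕ}
    (S : Fin (N + 1) → Zd d) (m : ℕ) :
    μ (pathOpen f U p' S ∩ openPathCount hfin U p N ⁻¹' {m}) =
      ENNReal.ofReal ((p' / p) ^ N) * μ (pathOpen f U p S ∩ openPathCount hfin U p N ⁻¹' {m}) := by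
  have hp₀ : 0 < p := hp'.trans_le hp'p
  have hp'1 : ∀ z, p' * f z ≤ 1 := fun z => (mul_le_mul_of_nonneg_right hp'p (hf0 z)).trans (hp z)
  rw [hU.measure_pathOpen_inter_fiber hfin hf0 hp'p,
    hU.measure_pathOpen_inter_fiber hfin hf0 le_rfl,
    hU.measure_pathOpen hf0 hp'.le hp'1, hU.measure_pathOpen hf0 hp₀.le hp, ← mul_assoc,
    ← ENNReal.ofReal_mul (by positivity)]
  congr 2
  rw [div_pow]
  field_simp

theorem IsUniformField.setLIntegral_openPathCount (hfin : (Function.support f).Finite)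
    (hU : IsUniformField μ U) (q : ℝ) (N : ℕ) (B : Set Ω) :
    ∫⁻ ω in B, (openPathCount hfin U q N ω : ℝ≥0∞) ∂μ =
      ∑ S ∈ (stepPaths_finite hfin N).toFinset, μ (pathOpen f U q S ∩ B) := by
  have hcast : ∀ ω, (openPathCount hfin U q N ω : ℝ≥0∞) =
      ∑ S ∈ (stepPaths_finite hfin N).toFinset, (pathOpen f U q S).indicator 1 ω := by
    intro ω
    rw [openPathCount, Nat.cast_sum]
    refine Finset.sum_congr rfl fun S _ => ?_
    by_cases h : ω ∈ pathOpen f U q S <;> simp [h]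
  simp_rw [hcast]
  rw [lintegral_finsetSum _ fun S _ => measurable_one.indicator (hU.measurableSet_pathOpen q S)]
  refine Finset.sum_congr rfl fun S _ => ?_
  rw [lintegral_indicator_one (hU.measurableSet_pathOpen q S), Measure.restrict_apply (hU.measurableSet_pathOpen q S)]

theorem IsUniformField.setLIntegral_openPathCount_fiber (hfin : (Function.support f).Finite)
    (hU : IsUniformField μ U) (hf0 : ∀ z, 0 ≤ f z) {p' p : ℝ} (hp' : 0 < p') (hp'p : p' ≤ p)
    (hp : ∀ z, p * f z ≤ 1) (N m : ℕ) :
    ∫⁻ ω in openPathCount hfin U p N ⁻¹' {m}, (openPathCount hfin U p' N ω : ℝ≥0∞) ∂μ =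
      ENNReal.ofReal ((p' / p) ^ N) * m * μ (openPathCount hfin U p N ⁻¹' {m}) := by
  have hm := hU.measurable_openPathCount hfin p N (measurableSet_singleton m)
  simp_rw [hU.setLIntegral_openPathCount hfin p' N,
    hU.measure_pathOpen_inter_fiber_eq_pow_mul hfin hf0 hp' hp'p hp, ← Finset.mul_sum,
    ← hU.setLIntegral_openPathCount hfin p N]
  rw [setLIntegral_congr_fun hm fun ω (hω : _ = m) => by rw [hω], setLIntegral_const, mul_assoc]

theorem IsUniformField.measure_pow_mul_openPathCount_lt_le [IsProbabilityMeasure μ]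
    (hfin : (Function.support f).Finite) (hU : IsUniformField μ U) (hf0 : ∀ z, 0 ≤ f z)
    {p' p : ℝ} (hp' : 0 < p') (hp'p : p' ≤ p) (hp : ∀ z, p * f z ≤ 1) {θ : ℝ} (hθ : 0 < θ)
    (N : ℕ) :
    μ {ω | θ ^ N * (openPathCount hfin U p N ω : ℝ) < openPathCount hfin U p' N ω} ≤
      ENNReal.ofReal ((p' / p / θ) ^ N) := by
  have hset : {ω | θ ^ N * (openPathCount hfin U p N ω : ℝ) < openPathCount hfin U p' N ω} =
      {ω | ENNReal.ofReal (θ ^ N) * openPathCount hfin U p N ω < openPathCount hfin U p' N ω} := by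
    ext ω
    rw [Set.mem_ofPred_eq, Set.mem_ofPred_eq, ← ENNReal.ofReal_natCast, ← ENNReal.ofReal_natCast,
      ← ENNReal.ofReal_mul (by positivity), ENNReal.ofReal_lt_ofReal_iff_of_nonneg (by positivity)]
  rw [hset]
  refine (measure_mul_lt_le_of_setLIntegral_le (hU.measurable_openPathCount hfin p N)
    (measurable_from_top.comp (hU.measurable_openPathCount hfin p' N)).aemeasurable
    (by positivity) ENNReal.ofReal_ne_top
    fun m => (hU.setLIntegral_openPathCount_fiber hfin hf0 hp' hp'p hp N m).le).trans_eq ?_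
  rw [measure_univ, mul_one, ← ENNReal.ofReal_div_of_pos (by positivity), div_pow (p' / p)]

theorem IsUniformField.ae_eventually_openPathCount_le [IsProbabilityMeasure μ]
    (hfin : (Function.support f).Finite) (hU : IsUniformField μ U) (hf0 : ∀ z, 0 ≤ f z)
    {p' p : ℝ} (hp' : 0 < p') (hp'p : p' ≤ p) (hp : ∀ z, p * f z ≤ 1) {θ : ℝ}
    (hθ : p' / p < θ) :
    ∀ᵐ ω ∂μ, ∀ᶠ N in atTop,
      (openPathCount hfin U p' N ω : ℝ) ≤ θ ^ N * openPathCount hfin U p N ω := by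
  have hr₀ : 0 < p' / p := div_pos hp' (hp'.trans_le hp'p)
  have hθ₀ : 0 < θ := hr₀.trans hθ
  have hsum : ∑' N, μ {ω | θ ^ N * (openPathCount hfin U p N ω : ℝ) <
      openPathCount hfin U p' N ω} ≠ ∞ := by
    refine ne_top_of_le_ne_top ?_ (ENNReal.tsum_le_tsum fun N =>
      hU.measure_pow_mul_openPathCount_lt_le hfin hf0 hp' hp'p hp hθ₀ N)
    rw [← ENNReal.ofReal_tsum_of_nonneg (fun N => by positivity)
      (summable_geometric_of_lt_one (by positivity) ((div_lt_one hθ₀).2 hθ))]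
    exact ENNReal.ofReal_ne_top
  filter_upwards [ae_eventually_notMem hsum] with ω hω
  filter_upwards [hω] with N hN
  exact not_lt.1 hN

theorem IsUniformField.ae_forall_gt_eventually_openPathCount_le [IsProbabilityMeasure μ]
    (hfin : (Function.support f).Finite) (hU : IsUniformField μ U) (hf0 : ∀ z, 0 ≤ f z)
    {p' p : ℝ} (hp' : 0 < p') (hp'p : p' ≤ p) (hp : ∀ z, p * f z ≤ 1) :
    ∀ᵐ ω ∂μ, ∀ θ > p' / p, ∀ᶠ N in atTop,
      (openPathCount hfin U p' N ω : ℝ) ≤ θ ^ N * openPathCount hfin U p N ω := by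
  have hr₀ : 0 < p' / p := div_pos hp' (hp'.trans_le hp'p)
  have hrat := ae_all_iff.2 fun q : {q : ℚ // p' / p < q} =>
    hU.ae_eventually_openPathCount_le hfin hf0 hp' hp'p hp (μ := μ) q.2
  filter_upwards [hrat] with ω hω θ hθ
  obtain ⟨q, hrq, hqθ⟩ := exists_rat_btwn hθ
  have hq₀ : (0 : ℝ) ≤ q := hr₀.le.trans hrq.le
  filter_upwards [hω ⟨q, hrq⟩] with N hN
  exact hN.trans (by gcongr)

end OrientedPercolation

theorem stmt7_general {Ω : Type} [MeasurableSpace Ω] (μ : Measure Ω) [IsProbabilityMeasure μ]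
    (d : ℕ) (f : Zd d → ℝ) (hf0 : ∀ z, 0 ≤ f z)
    (hfin : (Function.support f).Finite)
    (U : ℕ → Zd d → Zd d → Ω → ℝ)
    (hUmeas : ∀ n x y, Measurable (U n x y))
    (hUindep : iIndepFun
      (fun e : ℕ × Zd d × Zd d => U e.1 e.2.1 e.2.2) μ)
    (hUunif : ∀ n x y, μ.map (U n x y) = (volume : Measure ℝ).restrict (Set.Icc 0 1))
    (F : ℝ → EReal)
    (hF : ∀ q : ℝ, 0 < q → (∀ z, q * f z ≤ 1) →
      (μ ((coupledEnv d f U q) ⁻¹' percEvent d) = 0 → F q = ⊥) ∧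
      (0 < μ ((coupledEnv d f U q) ⁻¹' percEvent d) →
        ∀ᵐ ω ∂(μ[|(coupledEnv d f U q) ⁻¹' percEvent d]),
          Filter.limsup (growthTerm d (coupledEnv d f U q ω)) atTop = F q)) :
    ∀ p' p : ℝ, 0 < p' → p' ≤ p → (∀ z, p * f z ≤ 1) →
      F p' - (Real.log p' : EReal) ≤ F p - (Real.log p : EReal) := by
  intro p' p hp' hp'p hp
  have hU : OrientedPercolation.IsUniformField μ U := ⟨hUmeas, hUindep, hUunif⟩
  have hp₀ : 0 < p := hp'.trans_le hp'p
  have hp'1 : ∀ z, p' * f z ≤ 1 := fun z => (mul_le_mul_of_nonneg_right hp'p (hf0 z)).trans (hp z)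
  set A' := coupledEnv d f U p' ⁻¹' percEvent d
  obtain hA' | hA' := eq_or_ne (μ A') 0
  · simp [(hF p' hp' hp'1).1 hA']
  have hA'A : A' ⊆ coupledEnv d f U p ⁻¹' percEvent d :=
    OrientedPercolation.preimage_percEvent_mono hf0 hp'p
  have hlim' := (hF p' hp' hp'1).2 (pos_iff_ne_zero.2 hA')
  have hlim := (cond_absolutelyContinuous_cond_of_subset hA'A (measure_ne_top μ _)).ae_le <|
    (hF p hp₀ hp).2 ((pos_iff_ne_zero.2 hA').trans_le (measure_mono hA'A))
  have hgood := (cond_absolutelyContinuous (s := A')).ae_le <| hU.ae_forall_pos.and <|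
    hU.ae_forall_gt_eventually_openPathCount_le hfin hf0 hp' hp'p hp
  have := cond_isProbabilityMeasure (μ := μ) hA'
  obtain ⟨ω, hω', hω, hpos, hcount⟩ := (hlim'.and (Eventually.and hlim hgood)).exists
  refine EReal.sub_coe_le_sub_coe_of_le_add ?_
  rw [← hω', ← hω, ← Real.log_div hp'.ne' hp₀.ne']
  refine OrientedPercolation.limsup_growthTerm_le (div_pos hp' hp₀) fun θ hθ => ?_
  simpa only [OrientedPercolation.pathCount_coupledEnv hfin hpos] using hcount θ hθ

/-- The function `p ↦ F(p) - log p` is non-decreasing on `(0, p_max]`,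
where `F(p)` is the a.s. value of `limsup N⁻¹ log Z_N` on the percolation event,
and `⊥` when percolation does not occur. -/
theorem stmt7 {Ω : Type} [MeasurableSpace Ω] (μ : Measure Ω) [IsProbabilityMeasure μ]
    (d : ℕ) (f : Zd d → ℝ) (hf0 : ∀ z, 0 ≤ f z)
    (hfin : (Function.support f).Finite) (hsum : ∑ᶠ z, f z = 1)
    (U : ℕ → Zd d → Zd d → Ω → ℝ)
    (hUmeas : ∀ n x y, Measurable (U n x y))
    (hUindep : iIndepFun
      (fun e : ℕ × Zd d × Zd d => U e.1 e.2.1 e.2.2) μ)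
    (hUunif : ∀ n x y, μ.map (U n x y) = (volume : Measure ℝ).restrict (Set.Icc 0 1))
    (F : ℝ → EReal)
    (hF : ∀ q : ℝ, 0 < q → (∀ z, q * f z ≤ 1) →
      (μ ((coupledEnv d f U q) ⁻¹' percEvent d) = 0 → F q = ⊥) ∧
      (0 < μ ((coupledEnv d f U q) ⁻¹' percEvent d) →
        ∀ᵐ ω ∂(μ[|(coupledEnv d f U q) ⁻¹' percEvent d]),
          Filter.limsup (growthTerm d (coupledEnv d f U q ω)) atTop = F q)) :
    ∀ p' p : ℝ, 0 < p' → p' ≤ p → (∀ z, p * f z ≤ 1) →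
      F p' - (Real.log p' : EReal) ≤ F p - (Real.log p : EReal) :=
  stmt7_general μ d f hf0 hfin U hUmeas hUindep hUunif F hF
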